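/- arXiv:0807.0245 — 5 statements merged into one kernel-verified Lean document; each statement's English description precedes it below -/
import Mathlib

section
/- Let L and K be positive integers. There exist real constants C_Tmin and C_Tmax with 0 < C_Tmin ≤ C_Tmax ≤ 1, depending only on L and K, such that for every nonzero α ∈ ℂ^L: C_Tmin·‖α‖^(2K) ≤ det(T(α,L,K)ᴴ T(α,L,K)) ≤ C_Tmax·‖α‖^(2K). -/
open Matrix

/-- The `(K+L−1) × K` Toeplitz matrix generated by `α ∈ ℂ^L`: its `(i,j)` entry (0-based)
is `α (i−j)` when `0 ≤ i−j ≤ L−1` and `0` otherwise. -/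
noncomputable def Toep (L K : ℕ) (α : Fin L → ℂ) : Matrix (Fin (K + L - 1)) (Fin K) ℂ :=
  Matrix.of fun i j =>
    if h : (j : ℕ) ≤ (i : ℕ) ∧ (i : ℕ) - (j : ℕ) < L
    then α ⟨(i : ℕ) - (j : ℕ), h.2⟩ else 0

/-!
The Gram determinant `f α = det (T(α)ᴴ T(α))` is continuous and homogeneous of degree `2K` in `α`.
It is positive for `α ≠ 0`: `T(α) x` is the coefficient vector of the polynomial product
`α(X) x(X)`, and `ℂ[X]` is a domain, so `T(α)` is injective. The minimum of `f` on the unit sphere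
is therefore a positive lower constant. For the upper one, every column of `T(α)` has norm `‖α‖`,
so `trace (T(α)ᴴ T(α)) = K ‖α‖²`, and AM–GM on the eigenvalues gives
`f α ≤ (trace / K) ^ K = ‖α‖ ^ (2K)`.
-/

open Finset Polynomial
open scoped ComplexOrder

theorem Real.prod_le_sum_div_card_pow {ι : Type*} (s : Finset ι) (z : ι → ℝ)
    (hz : ∀ i ∈ s, 0 ≤ z i) : ∏ i ∈ s, z i ≤ ((∑ i ∈ s, z i) / #s) ^ #s := by
  rcases s.eq_empty_or_nonempty with rfl | hs
  · simp
  have hprod : 0 ≤ ∏ i ∈ s, z i := prod_nonneg hz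
  have amgm := Real.geom_mean_le_arith_mean s 1 z (fun _ _ => zero_le_one)
    (by simpa using hs) hz
  simp only [Pi.one_apply, Real.rpow_one, sum_const, nsmul_eq_mul, mul_one, one_mul] at amgm
  calc ∏ i ∈ s, z i = ((∏ i ∈ s, z i) ^ ((#s : ℝ))⁻¹) ^ #s :=
        (Real.rpow_inv_natCast_pow hprod hs.card_pos.ne').symm
    _ ≤ ((∑ i ∈ s, z i) / #s) ^ #s := by gcongr

theorem Matrix.PosSemidef.re_det_le_re_trace_div_card_pow {𝕜 n : Type*} [RCLike 𝕜]
    [Fintype n] [DecidableEq n] {A : Matrix n n 𝕜} (hA : A.PosSemidef) :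
    RCLike.re A.det ≤ (RCLike.re A.trace / Fintype.card n) ^ Fintype.card n := by
  have hdet : RCLike.re A.det = ∏ i, hA.1.eigenvalues i := by
    rw [hA.1.det_eq_prod_eigenvalues, ← RCLike.ofReal_prod, RCLike.ofReal_re]
  have htrace : RCLike.re A.trace = ∑ i, hA.1.eigenvalues i := by
    rw [hA.1.trace_eq_sum_eigenvalues, ← RCLike.ofReal_sum, RCLike.ofReal_re]
  rw [hdet, htrace]
  exact Real.prod_le_sum_div_card_pow univ _ fun i _ => hA.eigenvalues_nonneg i

theorem exists_pos_mul_norm_pow_le_of_homogeneous {𝕜 E : Type*} [RCLike 𝕜]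
    [NormedAddCommGroup E] [NormedSpace 𝕜 E] [FiniteDimensional 𝕜 E] [Nontrivial E]
    {f : E → ℝ} {k : ℕ} (hf : Continuous f) (hf_smul : ∀ (c : 𝕜) x, f (c • x) = ‖c‖ ^ k * f x)
    (hf_pos : ∀ x, x ≠ 0 → 0 < f x) :
    ∃ C, 0 < C ∧ ∀ x, x ≠ 0 → C * ‖x‖ ^ k ≤ f x := by
  have : ProperSpace E := FiniteDimensional.proper_rclike 𝕜 E
  obtain ⟨x₀, hx₀⟩ := exists_ne (0 : E)
  have hsphere : (Metric.sphere (0 : E) 1).Nonempty :=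
    ⟨_, mem_sphere_zero_iff_norm.mpr (norm_smul_inv_norm (𝕜 := 𝕜) hx₀)⟩
  obtain ⟨u, hu, hmin⟩ :=
    (isCompact_sphere (0 : E) 1).exists_isMinOn hsphere hf.continuousOn
  refine ⟨f u, hf_pos u (ne_zero_of_mem_unit_sphere ⟨u, hu⟩), fun x hx => ?_⟩
  have hx_eq : (‖x‖ : 𝕜) • ((‖x‖ : 𝕜)⁻¹ • x) = x := by
    rw [smul_smul, mul_inv_cancel₀ (by simpa using hx), one_smul]
  calc f u * ‖x‖ ^ k ≤ f ((‖x‖ : 𝕜)⁻¹ • x) * ‖x‖ ^ k := by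
        gcongr
        exact isMinOn_iff.mp hmin _ (mem_sphere_zero_iff_norm.mpr (norm_smul_inv_norm hx))
    _ = f x := by
        conv_rhs => rw [← hx_eq, hf_smul, RCLike.norm_ofReal, abs_norm, mul_comm]

theorem toep_smul (L K : ℕ) (c : ℂ) (α : Fin L → ℂ) :
    Toep L K (c • α) = c • Toep L K α := by
  ext i j
  simp only [Toep, Matrix.of_apply, Matrix.smul_apply, Pi.smul_apply, smul_eq_mul]
  split <;> simp

theorem continuous_toep (L K : ℕ) :
    Continuous fun α : EuclideanSpace ℂ (Fin L) => Toep L K α := by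
  refine continuous_matrix fun i j => ?_
  simp only [Toep, Matrix.of_apply]
  split
  · exact (EuclideanSpace.proj _).continuous
  · exact continuous_const

theorem toep_mulVec (L K : ℕ) (α : Fin L → ℂ) (x : Fin K → ℂ) :
    Toep L K α *ᵥ x = toFn (K + L - 1) (ofFn L α * ofFn K x) := by
  ext i
  simp only [toFn, LinearMap.pi_apply, lcoeff_apply, mulVec, dotProduct, ofFn_eq_sum_monomial x,
    mul_sum, finsetSum_coeff]
  refine sum_congr rfl fun j _ => ?_
  rw [← C_mul_X_pow_eq_monomial, mul_left_comm, coeff_C_mul, coeff_mul_X_pow', mul_comm]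
  simp only [Toep, Matrix.of_apply]
  by_cases hji : (j : ℕ) ≤ i
  · by_cases hL : (i : ℕ) - j < L
    · simp [hji, hL]
    · simp [hji, hL, ofFn_coeff_eq_zero_of_ge _ (not_lt.mp hL)]
  · simp [hji]

theorem toep_mulVec_injective (L K : ℕ) {α : Fin L → ℂ} (hα : α ≠ 0) :
    Function.Injective (Toep L K α).mulVec := by
  refine (injective_iff_map_eq_zero (mulVecLin (Toep L K α))).mpr fun x hx => ?_
  by_contra hx0
  have hp : ofFn L α ≠ 0 := (map_ne_zero_iff _ (injective_ofFn L)).mpr hα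
  have hq : ofFn K x ≠ 0 := (map_ne_zero_iff _ (injective_ofFn K)).mpr hx0
  have hdeg : (ofFn L α * ofFn K x).natDegree < K + L - 1 := by
    have hpL := ofFn_natDegree_lt (Nat.one_le_iff_ne_zero.mpr (ne_zero_of_ofFn_ne_zero hp)) α
    have hqK := ofFn_natDegree_lt (Nat.one_le_iff_ne_zero.mpr (ne_zero_of_ofFn_ne_zero hq)) x
    rw [natDegree_mul hp hq]
    omega
  refine mul_ne_zero hp hq ?_
  rw [← ofFn_comp_toFn_eq_id_of_natDegree_lt hdeg, ← toep_mulVec, ← mulVecLin_apply, hx,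
    map_zero]

theorem sum_norm_sq_toep_col (L K : ℕ) (α : Fin L → ℂ) (j : Fin K) :
    ∑ i, ‖Toep L K α i j‖ ^ 2 = ∑ l, ‖α l‖ ^ 2 := by
  refine (Fintype.sum_of_injective (fun l : Fin L => (⟨j + l, by omega⟩ : Fin (K + L - 1)))
    (fun a b h => Fin.ext (Nat.add_left_cancel (congrArg Fin.val h))) _ _ ?_ ?_).symm
  · intro i hi
    simp only [Toep, of_apply]
    rw [dif_neg, norm_zero, zero_pow two_ne_zero]
    rintro ⟨hji, hiL⟩
    exact hi ⟨⟨i - j, hiL⟩, Fin.ext (by simp only; omega)⟩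
  · intro l
    simp [Toep]

theorem toep_gram_apply_self (L K : ℕ) (α : EuclideanSpace ℂ (Fin L)) (j : Fin K) :
    ((Toep L K α)ᴴ * Toep L K α) j j = ((‖α‖ ^ 2 : ℝ) : ℂ) := by
  rw [EuclideanSpace.norm_sq_eq, ← sum_norm_sq_toep_col L K α j, mul_apply, Complex.ofReal_sum]
  refine sum_congr rfl fun i _ => ?_
  rw [conjTranspose_apply, Complex.star_def, Complex.conj_mul', Complex.ofReal_pow]

theorem re_det_toep_gram_le (L K : ℕ) (α : EuclideanSpace ℂ (Fin L)) :
    ((Toep L K α)ᴴ * Toep L K α).det.re ≤ ‖α‖ ^ (2 * K) := by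
  have htrace : ((Toep L K α)ᴴ * Toep L K α).trace.re = K * ‖α‖ ^ 2 := by
    simp only [trace, diag_apply, toep_gram_apply_self, sum_const, card_univ, Fintype.card_fin,
      nsmul_eq_mul, ← Complex.ofReal_natCast, ← Complex.ofReal_mul, Complex.ofReal_re]
  calc ((Toep L K α)ᴴ * Toep L K α).det.re
      ≤ (((Toep L K α)ᴴ * Toep L K α).trace.re / K) ^ K := by
        simpa using (posSemidef_conjTranspose_mul_self (Toep L K α)).re_det_le_re_trace_div_card_pow
    _ = ‖α‖ ^ (2 * K) := by
        rw [htrace, pow_mul]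
        rcases K.eq_zero_or_pos with rfl | hK
        · simp
        · field_simp

theorem re_det_toep_gram_pos (L K : ℕ) {α : Fin L → ℂ} (hα : α ≠ 0) :
    0 < ((Toep L K α)ᴴ * Toep L K α).det.re :=
  (Complex.pos_iff.mp (PosDef.conjTranspose_mul_self _ (toep_mulVec_injective L K hα)).det_pos).1

theorem re_det_toep_gram_smul (L K : ℕ) (c : ℂ) (α : Fin L → ℂ) :
    ((Toep L K (c • α))ᴴ * Toep L K (c • α)).det.re
      = ‖c‖ ^ (2 * K) * ((Toep L K α)ᴴ * Toep L K α).det.re := by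
  rw [toep_smul, conjTranspose_smul, Matrix.smul_mul, Matrix.mul_smul, smul_smul, det_smul,
    Fintype.card_fin, Complex.star_def, Complex.conj_mul', ← pow_mul, ← Complex.ofReal_pow,
    Complex.re_ofReal_mul]

theorem stmt4_general (L K : ℕ) (hL : 0 < L) :
    ∃ CTmin CTmax : ℝ, 0 < CTmin ∧ CTmin ≤ CTmax ∧ CTmax ≤ 1 ∧
      ∀ α : EuclideanSpace ℂ (Fin L), α ≠ 0 →
        CTmin * ‖α‖ ^ (2 * K) ≤ ((Toep L K α)ᴴ * Toep L K α).det.re ∧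
        ((Toep L K α)ᴴ * Toep L K α).det.re ≤ CTmax * ‖α‖ ^ (2 * K) := by
  have : Nonempty (Fin L) := ⟨⟨0, hL⟩⟩
  obtain ⟨C, hC, hCle⟩ := exists_pos_mul_norm_pow_le_of_homogeneous (𝕜 := ℂ)
    (f := fun α : EuclideanSpace ℂ (Fin L) => ((Toep L K α)ᴴ * Toep L K α).det.re) (k := 2 * K)
    (Complex.continuous_re.comp
      ((continuous_toep L K).matrix_conjTranspose.matrix_mul (continuous_toep L K)).matrix_det)
    (fun c α => by rw [WithLp.ofLp_smul]; exact re_det_toep_gram_smul L K c α)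
    (fun α hα => re_det_toep_gram_pos L K ((WithLp.ofLp_injective 2).ne hα))
  refine ⟨min C 1, 1, lt_min hC one_pos, min_le_right C 1, le_rfl, fun α hα => ⟨?_, ?_⟩⟩
  · calc min C 1 * ‖α‖ ^ (2 * K) ≤ C * ‖α‖ ^ (2 * K) := by gcongr; exact min_le_left C 1
      _ ≤ _ := hCle α hα
  · rw [one_mul]
    exact re_det_toep_gram_le L K α

/-- There are constants `0 < C_Tmin ≤ C_Tmax ≤ 1`, depending only on `L`
and `K`, with `C_Tmin ‖α‖^(2K) ≤ det (T(α,L,K)ᴴ T(α,L,K)) ≤ C_Tmax ‖α‖^(2K)` for all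
nonzero `α`. -/
theorem stmt4 (L K : ℕ) (hL : 0 < L) (hK : 0 < K) :
    ∃ CTmin CTmax : ℝ, 0 < CTmin ∧ CTmin ≤ CTmax ∧ CTmax ≤ 1 ∧
      ∀ α : EuclideanSpace ℂ (Fin L), α ≠ 0 →
        CTmin * ‖α‖ ^ (2 * K) ≤ ((Toep L K α)ᴴ * Toep L K α).det.re ∧
        ((Toep L K α)ᴴ * Toep L K α).det.re ≤ CTmax * ‖α‖ ^ (2 * K) :=
  stmt4_general L K hL
end

section
/- Let L and M be positive integers, let d > 0, and let e ∈ ℂ^L be a nonzero vector each of whose nonzero entries has modulus at least d. For any m with 1 ≤ m ≤ M and any indices 1 ≤ i_1 < i_2 < … < i_m ≤ M, let T_sub denote the submatrix of the Toeplitz matrix T(e, L, M) consisting of columns i_1, …, i_m. Then det(T_subᴴ T_sub) ≥ d^(2m), with equality if and only if ‖e‖ = d. -/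
open Matrix

/-!
By Cauchy–Binet, `det (Aᴴ A)` is the sum of `|det A_g|²` over all `m`-subsets `g` of rows.
Let `ℓ₁` be the last index with `e ℓ₁ ≠ 0`. For every `ℓ ≤ ℓ₁`, taking row `i₁ + ℓ` for the
first selected column and rows `i_j + ℓ₁` for the others gives an upper triangular minor with
diagonal `e ℓ, e ℓ₁, …, e ℓ₁`. These minors alone contribute `‖e‖² |e ℓ₁|^(2(m-1))`, which is
at least `‖e‖² d^(2(m-1)) ≥ d^(2m)`; equality forces `‖e‖ = d`. Conversely, `‖e‖ = d` leaves
room for only one nonzero entry of `e`, and then the columns of the Toeplitz matrix are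
orthogonal of norm `d`.
-/

open Finset Equiv

section CauchyBinet

variable {R : Type*} [CommRing R] {m n : ℕ}

theorem Tuple.eq_of_strictMono_comp_perm {g g' : Fin m → Fin n} (hg : StrictMono g)
    (hg' : StrictMono g') {τ τ' : Perm (Fin m)} (h : g ∘ τ = g' ∘ τ') : g = g' ∧ τ = τ' := by
  have sorted : ∀ {g : Fin m → Fin n}, StrictMono g → ∀ τ : Perm (Fin m),
      (g ∘ τ) ∘ Tuple.sort (g ∘ τ) = g := fun hg τ => by
    rw [Tuple.comp_perm_comp_sort_eq_comp_sort, Tuple.sort_eq_refl_iff_monotone.2 hg.monotone]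
    rfl
  obtain rfl : g = g' := by rw [← sorted hg τ, ← sorted hg' τ', h]
  exact ⟨rfl, Equiv.ext fun i => hg.injective (congrFun h i)⟩

theorem Function.Injective.exists_strictMono_comp_perm {f : Fin m → Fin n}
    (hf : f.Injective) : ∃ g : Fin m → Fin n, StrictMono g ∧ ∃ τ : Perm (Fin m), g ∘ τ = f := by
  refine ⟨f ∘ Tuple.sort f, (Tuple.monotone_sort f).strictMono_of_injective
    (hf.comp (Tuple.sort f).injective), (Tuple.sort f)⁻¹, ?_⟩
  ext i
  simp

theorem Matrix.det_mul_eq_sum_det_submatrix_mul_prod (A : Matrix (Fin m) (Fin n) R)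
    (B : Matrix (Fin n) (Fin m) R) :
    (A * B).det = ∑ f : Fin m → Fin n, (A.submatrix id f).det * ∏ i, B (f i) i := by
  simp only [det_apply', mul_apply, prod_univ_sum, mul_sum, Fintype.piFinset_univ, sum_mul,
    submatrix_apply, id, prod_mul_distrib, mul_assoc]
  exact sum_comm

theorem Matrix.det_submatrix_comp_perm (A : Matrix (Fin m) (Fin n) R) (g : Fin m → Fin n)
    (τ : Perm (Fin m)) :
    (A.submatrix id (g ∘ τ)).det = Perm.sign τ * (A.submatrix id g).det := by
  rw [← det_permute', submatrix_submatrix]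
  rfl

/-- The Cauchy–Binet formula. -/
theorem Matrix.det_mul_eq_sum_strictMono (A : Matrix (Fin m) (Fin n) R)
    (B : Matrix (Fin n) (Fin m) R) :
    (A * B).det = ∑ g : Fin m → Fin n with StrictMono g,
      (A.submatrix id g).det * (B.submatrix g id).det := by
  set F : (Fin m → Fin n) → R := fun f => (A.submatrix id f).det * ∏ i, B (f i) i
  have hF : ∀ f, F f ≠ 0 → f.Injective := by
    intro f hf
    by_contra hinj
    obtain ⟨i, j, hij, hne⟩ : ∃ i j, f i = f j ∧ i ≠ j := by
      simpa [Function.Injective] using hinj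
    have hA : (A.submatrix id f).det = 0 := det_zero_of_column_eq hne fun k => by simp [hij]
    exact hf (by simp [F, hA])
  calc (A * B).det = ∑ f, F f := det_mul_eq_sum_det_submatrix_mul_prod A B
    _ = ∑ p ∈ ({g | StrictMono g} : Finset (Fin m → Fin n)) ×ˢ (univ : Finset (Perm (Fin m))),
          F (p.1 ∘ p.2) := by
      refine (sum_bij_ne_zero (fun p _ _ => p.1 ∘ p.2) (fun _ _ _ => mem_univ _) ?_ ?_ ?_).symm
      · rintro ⟨g, τ⟩ hp _ ⟨g', τ'⟩ hp' _ h
        simp only [mem_product, mem_filter_univ] at hp hp'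
        obtain ⟨rfl, rfl⟩ := Tuple.eq_of_strictMono_comp_perm hp.1 hp'.1 h
        rfl
      · intro f _ hf
        obtain ⟨g, hg, τ, rfl⟩ := (hF f hf).exists_strictMono_comp_perm
        exact ⟨(g, τ), by simpa using hg, hf, rfl⟩
      · intros; rfl
    _ = _ := by
      rw [sum_product]
      refine sum_congr rfl fun g _ => ?_
      rw [det_apply' (B.submatrix g id), mul_sum]
      refine Fintype.sum_congr _ _ fun τ => ?_
      simp only [F, det_submatrix_comp_perm, submatrix_apply, id, Function.comp_apply]
      ring

theorem Matrix.det_conjTranspose_mul_self_eq_sum [StarRing R] (A : Matrix (Fin n) (Fin m) R) :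
    (Aᴴ * A).det = ∑ g : Fin m → Fin n with StrictMono g,
      star (A.submatrix g id).det * (A.submatrix g id).det := by
  simp only [det_mul_eq_sum_strictMono, ← conjTranspose_submatrix, det_conjTranspose]

end CauchyBinet

theorem Matrix.det_conjTranspose_mul_self_re {m n : ℕ} (A : Matrix (Fin n) (Fin m) ℂ) :
    (Aᴴ * A).det.re = ∑ g : Fin m → Fin n with StrictMono g, ‖(A.submatrix g id).det‖ ^ 2 := by
  simp only [det_conjTranspose_mul_self_eq_sum, Complex.star_def, Complex.conj_mul',
    Complex.re_sum]
  norm_cast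

theorem Fin.exists_ne_zero_forall_lt_eq_zero {M : Type*} [Zero M] {L : ℕ} {v : Fin L → M}
    (hv : v ≠ 0) : ∃ ℓ₁, v ℓ₁ ≠ 0 ∧ ∀ ℓ, ℓ₁ < ℓ → v ℓ = 0 := by
  classical
  obtain ⟨ℓ₀, hℓ₀⟩ := Function.ne_iff.1 hv
  obtain ⟨ℓ₁, hℓ₁, hmax⟩ := exists_max_image {ℓ | v ℓ ≠ 0} id ⟨ℓ₀, by simpa using hℓ₀⟩
  refine ⟨ℓ₁, by simpa using hℓ₁, fun ℓ hlt => ?_⟩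
  by_contra hℓ
  exact (hmax ℓ (by simpa using hℓ)).not_gt hlt

theorem EuclideanSpace.sq_norm_apply_add_sq_norm_apply_le {𝕜 ι : Type*} [RCLike 𝕜] [Fintype ι]
    (x : EuclideanSpace 𝕜 ι) {i j : ι} (hij : i ≠ j) : ‖x i‖ ^ 2 + ‖x j‖ ^ 2 ≤ ‖x‖ ^ 2 := by
  classical
  rw [EuclideanSpace.norm_sq_eq, ← sum_pair (f := fun k => ‖x k‖ ^ 2) hij]
  exact sum_le_sum_of_subset_of_nonneg (subset_univ _) fun _ _ _ => by positivity

namespace Toep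

variable {L K m : ℕ} (α : Fin L → ℂ)

def coeffRow (j : Fin K) (ℓ : Fin L) : Fin (K + L - 1) :=
  ⟨j + ℓ, by omega⟩

theorem apply_coeffRow (j : Fin K) (ℓ : Fin L) : Toep L K α (coeffRow j ℓ) j = α ℓ := by
  simp [Toep, coeffRow]

theorem apply_eq_zero {i : Fin (K + L - 1)} {j : Fin K}
    (h : ∀ ℓ : Fin L, (i : ℕ) = j + ℓ → α ℓ = 0) : Toep L K α i j = 0 := by
  simp only [Toep, of_apply, dite_eq_right_iff]
  exact fun hij => h _ (by simp only; omega)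

theorem conjTranspose_mul_self_of_forall_ne {ℓ₁ : Fin L} (hα : ∀ ℓ ≠ ℓ₁, α ℓ = 0) :
    (Toep L K α)ᴴ * Toep L K α = ((‖α ℓ₁‖ ^ 2 : ℝ) : ℂ) • 1 := by
  ext j k
  have hcol : ∀ i ≠ coeffRow j ℓ₁, Toep L K α i j = 0 := fun i hi =>
    apply_eq_zero α fun ℓ hℓ => hα ℓ fun h => hi (Fin.ext (by simp [coeffRow, hℓ, h]))
  rw [mul_apply, sum_eq_single (coeffRow j ℓ₁) (fun i _ hi => by simp [hcol i hi]) (by simp),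
    conjTranspose_apply, apply_coeffRow, Matrix.smul_apply, Complex.star_def]
  rcases eq_or_ne j k with rfl | hjk
  · simp [apply_coeffRow, Complex.conj_mul']
  · have hrow : Toep L K α (coeffRow j ℓ₁) k = 0 :=
      apply_eq_zero α fun ℓ hℓ => hα ℓ fun h => hjk (Fin.ext (by simp [coeffRow, h] at hℓ; omega))
    simp [hrow, hjk]

theorem det_submatrix_conjTranspose_mul_self_of_forall_ne {ℓ₁ : Fin L}
    (hα : ∀ ℓ ≠ ℓ₁, α ℓ = 0) {idx : Fin m → Fin K} (hidx : Function.Injective idx) :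
    (((Toep L K α).submatrix id idx)ᴴ * (Toep L K α).submatrix id idx).det =
      ‖α ℓ₁‖ ^ (2 * m) := by
  rw [conjTranspose_submatrix, ← submatrix_mul _ _ _ _ _ Function.bijective_id,
    conjTranspose_mul_self_of_forall_ne α hα, submatrix_smul, Pi.smul_apply, Pi.smul_apply,
    submatrix_one _ hidx, det_smul, det_one, Fintype.card_fin]
  push_cast
  ring

def staircase (ℓ₁ : Fin L) (idx : Fin (m + 1) → Fin K) (ℓ : Fin L) :
    Fin (m + 1) → Fin (K + L - 1) :=
  fun j => coeffRow (idx j) (if j = 0 then ℓ else ℓ₁)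

variable {α} {ℓ₁ : Fin L} {idx : Fin (m + 1) → Fin K}

theorem staircase_strictMono (hidx : StrictMono idx) {ℓ : Fin L} (hℓ : ℓ ≤ ℓ₁) :
    StrictMono (staircase ℓ₁ idx ℓ) := by
  intro j k hjk
  have hk : k ≠ 0 := Fin.ne_zero_of_lt hjk
  have := hidx hjk
  simp only [staircase, coeffRow, hk, if_false, Fin.mk_lt_mk]
  split_ifs <;> omega

theorem staircase_injective : Function.Injective (staircase ℓ₁ idx) := fun ℓ ℓ' h => by
  simpa [staircase, coeffRow, Fin.ext_iff] using congrFun h 0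

theorem det_submatrix_staircase (hα : ∀ ℓ, ℓ₁ < ℓ → α ℓ = 0) (hidx : StrictMono idx)
    (ℓ : Fin L) : ((Toep L K α).submatrix (staircase ℓ₁ idx ℓ) idx).det = α ℓ * α ℓ₁ ^ m := by
  have htri : ((Toep L K α).submatrix (staircase ℓ₁ idx ℓ) idx).IsUpperTriangular := by
    intro j k (hkj : k < j)
    have hj : j ≠ 0 := Fin.ne_zero_of_lt hkj
    have := hidx hkj
    refine apply_eq_zero α fun ℓ' hℓ' => hα ℓ' ?_
    simp only [staircase, coeffRow, hj, if_false] at hℓ'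
    rw [Fin.lt_def]
    omega
  rw [det_of_isUpperTriangular htri, Fin.prod_univ_succ]
  simp [staircase, apply_coeffRow, Fin.succ_ne_zero]

theorem sum_sq_norm_mul_le_det_re (hα : ∀ ℓ, ℓ₁ < ℓ → α ℓ = 0) (hidx : StrictMono idx) :
    (∑ ℓ, ‖α ℓ‖ ^ 2) * ‖α ℓ₁‖ ^ (2 * m) ≤
      (((Toep L K α).submatrix id idx)ᴴ * (Toep L K α).submatrix id idx).det.re := by
  set A := (Toep L K α).submatrix id idx
  have hsub : ∀ ℓ, A.submatrix (staircase ℓ₁ idx ℓ) id =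
      (Toep L K α).submatrix (staircase ℓ₁ idx ℓ) idx := fun ℓ => submatrix_submatrix ..
  rw [det_conjTranspose_mul_self_re]
  calc (∑ ℓ, ‖α ℓ‖ ^ 2) * ‖α ℓ₁‖ ^ (2 * m)
      = ∑ ℓ ∈ Iic ℓ₁, ‖α ℓ * α ℓ₁ ^ m‖ ^ 2 := by
        rw [sum_mul, ← sum_subset (subset_univ (Iic ℓ₁)) fun ℓ _ hℓ => ?_]
        · simp [mul_pow, ← pow_mul, mul_comm m]
        · simp [hα ℓ (by simpa using hℓ)]
    _ = ∑ g ∈ (Iic ℓ₁).image (staircase ℓ₁ idx), ‖(A.submatrix g id).det‖ ^ 2 := by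
        rw [sum_image fun _ _ _ _ h => staircase_injective h]
        simp only [hsub, det_submatrix_staircase hα hidx]
    _ ≤ ∑ g : Fin (m + 1) → Fin (K + L - 1) with StrictMono g, ‖(A.submatrix g id).det‖ ^ 2 := by
        refine sum_le_sum_of_subset_of_nonneg ?_ fun _ _ _ => by positivity
        simpa [image_subset_iff] using fun ℓ hℓ => staircase_strictMono hidx hℓ

end Toep

theorem stmt9_general (L M : ℕ) (d : ℝ) (hd : 0 < d)
    (e : EuclideanSpace ℂ (Fin L)) (he : e ≠ 0)
    (hmod : ∀ ℓ : Fin L, e ℓ ≠ 0 → d ≤ ‖e ℓ‖)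
    (m : ℕ) (hm1 : 1 ≤ m)
    (idx : Fin m → Fin M) (hidx : StrictMono idx) :
    d ^ (2 * m) ≤
      (((Toep L M e).submatrix id idx)ᴴ * (Toep L M e).submatrix id idx).det.re ∧
    ((((Toep L M e).submatrix id idx)ᴴ * (Toep L M e).submatrix id idx).det.re
        = d ^ (2 * m) ↔ ‖e‖ = d) := by
  obtain ⟨k, rfl⟩ : ∃ k, m = k + 1 := ⟨m - 1, by omega⟩
  obtain ⟨ℓ₁, hℓ₁, hlast⟩ := Fin.exists_ne_zero_forall_lt_eq_zero (v := e) (by simpa using he)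
  have hd₁ : d ≤ ‖e ℓ₁‖ := hmod ℓ₁ hℓ₁
  have hde : d ≤ ‖e‖ := hd₁.trans (PiLp.norm_apply_le e ℓ₁)
  have hsplit : d ^ (2 * (k + 1)) = d ^ 2 * d ^ (2 * k) := by ring
  have hlow : ‖e‖ ^ 2 * d ^ (2 * k) ≤
      (((Toep L M e).submatrix id idx)ᴴ * (Toep L M e).submatrix id idx).det.re :=
    calc ‖e‖ ^ 2 * d ^ (2 * k) ≤ ‖e‖ ^ 2 * ‖e ℓ₁‖ ^ (2 * k) := by gcongr
      _ ≤ _ := by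
        rw [EuclideanSpace.norm_sq_eq]
        exact Toep.sum_sq_norm_mul_le_det_re hlast hidx
  refine ⟨?_, fun h => ?_, fun h => ?_⟩
  · rw [hsplit]
    exact le_trans (by gcongr) hlow
  · have : ‖e‖ ^ 2 * d ^ (2 * k) ≤ d ^ 2 * d ^ (2 * k) := hsplit ▸ h ▸ hlow
    replace : ‖e‖ ^ 2 ≤ d ^ 2 := le_of_mul_le_mul_right this (by positivity)
    exact le_antisymm ((pow_le_pow_iff_left₀ (norm_nonneg e) hd.le two_ne_zero).1 this) hde
  · have hsingle : ∀ ℓ ≠ ℓ₁, e ℓ = 0 := fun ℓ hne => by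
      by_contra hℓ
      have := EuclideanSpace.sq_norm_apply_add_sq_norm_apply_le e hne
      have := pow_le_pow_left₀ hd.le (hmod ℓ hℓ) 2
      have := pow_le_pow_left₀ hd.le hd₁ 2
      nlinarith
    have he₁ : ‖e ℓ₁‖ = d := le_antisymm (h ▸ PiLp.norm_apply_le e ℓ₁) hd₁
    rw [Toep.det_submatrix_conjTranspose_mul_self_of_forall_ne e hsingle hidx.injective, he₁]
    norm_cast

/-- Let `e ∈ ℂ^L` be nonzero with every nonzero entry of modulus at least
`d > 0`. For any strictly increasing choice of `m` columns (`1 ≤ m ≤ M`) of `T(e,L,M)`,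
the Gram determinant of the resulting submatrix `T_sub` satisfies
`det (T_subᴴ T_sub) ≥ d^(2m)`, with equality iff `‖e‖ = d`. -/
theorem stmt9 (L M : ℕ) (hL : 0 < L) (hM : 0 < M) (d : ℝ) (hd : 0 < d)
    (e : EuclideanSpace ℂ (Fin L)) (he : e ≠ 0)
    (hmod : ∀ ℓ : Fin L, e ℓ ≠ 0 → d ≤ ‖e ℓ‖)
    (m : ℕ) (hm1 : 1 ≤ m) (hmM : m ≤ M)
    (idx : Fin m → Fin M) (hidx : StrictMono idx) :
    d ^ (2 * m) ≤
      (((Toep L M e).submatrix id idx)ᴴ * (Toep L M e).submatrix id idx).det.re ∧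
    ((((Toep L M e).submatrix id idx)ᴴ * (Toep L M e).submatrix id idx).det.re
        = d ^ (2 * m) ↔ ‖e‖ = d) :=
  stmt9_general L M d hd e he hmod m hm1 idx hidx
end

section
/- Let Q(z) = ∫_z^∞ (2π)^{-1/2} e^{−x²/2} dx denote the Gaussian tail function. Then for every real z ≥ 0 and every t ∈ [0, 1]: 4(1−t)·Q(z) − 4(1−t)²·Q(z)² ≤ (1−t²)·e^{−z²/2}. -/
/-- The Gaussian tail function `Q(z) = (1/√(2π)) ∫_z^∞ e^{−x²/2} dx`. -/
noncomputable def gaussQ (z : ℝ) : ℝ :=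
  ∫ x in Set.Ioi z, (2 * Real.pi) ^ (-(1 / 2 : ℝ)) * Real.exp (-(x ^ 2 / 2))

/-!
Write `P = 1 − 2 Q(z) = (2/√(2π)) ∫₀^z e^{−x²/2} dx`, so that `4 Q (1 − Q) = 1 − P²`. By Fubini,
`P²` is `2/π` times the integral of `e^{−(x²+y²)/2}` over the square `(0, z)²`, which contains the
quarter disk of radius `z`, where polar coordinates give `(π/2)(1 − e^{−z²/2})`; hence
`4 Q (1 − Q) ≤ e^{−z²/2}`. For general `t`, the right side minus the left side is
`(1 − t)((1 + t)(e^{−z²/2} − 4 Q (1 − Q)) + 4 t Q (1 − 2 Q))`, nonnegative because `0 ≤ Q ≤ 1/2`.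
-/

open MeasureTheory Real Set

theorem integral_image_polarCoord_symm {E : Type*} [NormedAddCommGroup E] [NormedSpace ℝ E]
    {s : Set (ℝ × ℝ)} (hs : MeasurableSet s) (hst : s ⊆ polarCoord.target) (f : ℝ × ℝ → E) :
    ∫ p in polarCoord.symm '' s, f p = ∫ p in s, p.1 • f (polarCoord.symm p) := by
  rw [integral_image_eq_integral_abs_det_fderiv_smul volume hs
    (fun p _ ↦ (hasFDerivAt_polarCoord_symm p).hasFDerivWithinAt)
    (polarCoord.symm.injOn.mono hst)]
  refine setIntegral_congr_fun hs fun p hp ↦ ?_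
  rw [det_fderivPolarCoordSymm, abs_of_pos (hst hp).1]

theorem integrable_exp_neg_sq_div_two : Integrable fun x : ℝ ↦ exp (-(x ^ 2 / 2)) := by
  simpa only [neg_mul, one_div, inv_mul_eq_div] using
    integrable_exp_neg_mul_sq (by norm_num : (0 : ℝ) < 1 / 2)

theorem integral_Ioo_mul_exp_neg_sq_div_two {z : ℝ} (hz : 0 ≤ z) :
    ∫ r in Ioo 0 z, r * exp (-(r ^ 2 / 2)) = 1 - exp (-(z ^ 2 / 2)) := by
  have hderiv (r : ℝ) : HasDerivAt (fun r ↦ -exp (-(r ^ 2 / 2))) (r * exp (-(r ^ 2 / 2))) r :=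
    (((hasDerivAt_pow 2 r).div_const 2).fun_neg.exp).fun_neg.congr_deriv (by norm_num; ring)
  rw [← integral_Ioc_eq_integral_Ioo, ← intervalIntegral.integral_of_le hz,
    intervalIntegral.integral_eq_sub_of_hasDerivAt (fun r _ ↦ hderiv r)
      ((by fun_prop : Continuous fun r : ℝ ↦ r * exp (-(r ^ 2 / 2))).intervalIntegrable _ _)]
  norm_num
  ring

theorem integral_quarterDisk_exp_neg_sq_div_two {z : ℝ} (hz : 0 ≤ z) :
    ∫ p in polarCoord.symm '' (Ioo 0 z ×ˢ Ioo 0 (π / 2)),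
      exp (-(p.1 ^ 2 / 2)) * exp (-(p.2 ^ 2 / 2)) = π / 2 * (1 - exp (-(z ^ 2 / 2))) := by
  have hsub : Ioo 0 z ×ˢ Ioo 0 (π / 2) ⊆ polarCoord.target := by
    rw [polarCoord_target]
    exact prod_mono Ioo_subset_Ioi_self
      (Ioo_subset_Ioo (by linarith [pi_pos]) (by linarith [pi_pos]))
  have hpolar : (fun p : ℝ × ℝ ↦ p.1 • (exp (-((polarCoord.symm p).1 ^ 2 / 2)) *
      exp (-((polarCoord.symm p).2 ^ 2 / 2)))) = fun p ↦ p.1 * exp (-(p.1 ^ 2 / 2)) * 1 := by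
    ext p
    rw [polarCoord_symm_apply, smul_eq_mul, ← exp_add, mul_one]
    congr 2
    linear_combination (-p.1 ^ 2 / 2) * cos_sq_add_sin_sq p.2
  rw [integral_image_polarCoord_symm (measurableSet_Ioo.prod measurableSet_Ioo) hsub, hpolar,
    Measure.volume_eq_prod,
    setIntegral_prod_mul (fun r ↦ r * exp (-(r ^ 2 / 2))) (fun _ ↦ (1 : ℝ)),
    integral_Ioo_mul_exp_neg_sq_div_two hz]
  simp only [integral_const, MeasurableSet.univ, measureReal_restrict_apply, univ_inter,
    Real.volume_real_Ioo_of_le (by positivity : (0 : ℝ) ≤ π / 2), smul_eq_mul, mul_one]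
  ring

theorem polarCoord_symm_image_quarter_subset (z : ℝ) :
    polarCoord.symm '' (Ioo 0 z ×ˢ Ioo 0 (π / 2)) ⊆ Ioo 0 z ×ˢ Ioo 0 z := by
  rintro _ ⟨⟨r, θ⟩, ⟨⟨hr0, hrz⟩, ⟨hθ0, hθ⟩⟩, rfl⟩
  have hcos : 0 < cos θ := cos_pos_of_mem_Ioo ⟨by linarith [pi_pos], hθ⟩
  have hsin : 0 < sin θ := sin_pos_of_pos_of_lt_pi hθ0 (by linarith [pi_pos])
  have hcos1 := cos_le_one θ
  have hsin1 := sin_le_one θ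
  simp only [polarCoord_symm_apply, mem_prod, mem_Ioo]
  exact ⟨⟨by positivity, by nlinarith⟩, ⟨by positivity, by nlinarith⟩⟩

theorem sq_integral_Ioo_exp_neg_sq_div_two (z : ℝ) :
    (∫ x in Ioo 0 z, exp (-(x ^ 2 / 2))) ^ 2 =
      ∫ p in Ioo 0 z ×ˢ Ioo 0 z, exp (-(p.1 ^ 2 / 2)) * exp (-(p.2 ^ 2 / 2)) := by
  rw [Measure.volume_eq_prod, setIntegral_prod_mul (fun x ↦ exp (-(x ^ 2 / 2)))
    (fun x ↦ exp (-(x ^ 2 / 2))), sq]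

theorem pi_div_two_mul_one_sub_exp_le_sq_integral {z : ℝ} (hz : 0 ≤ z) :
    π / 2 * (1 - exp (-(z ^ 2 / 2))) ≤ (∫ x in Ioo 0 z, exp (-(x ^ 2 / 2))) ^ 2 := by
  have hint : Integrable (fun p : ℝ × ℝ ↦ exp (-(p.1 ^ 2 / 2)) * exp (-(p.2 ^ 2 / 2))) := by
    rw [Measure.volume_eq_prod]
    exact integrable_exp_neg_sq_div_two.mul_prod integrable_exp_neg_sq_div_two
  rw [← integral_quarterDisk_exp_neg_sq_div_two hz, sq_integral_Ioo_exp_neg_sq_div_two]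
  exact setIntegral_mono_set hint.integrableOn (.of_forall fun p ↦ by positivity)
    (polarCoord_symm_image_quarter_subset z).eventuallyLE

theorem gaussQ_eq {z : ℝ} (hz : 0 ≤ z) :
    gaussQ z = 1 / 2 - (√(2 * π))⁻¹ * ∫ x in Ioo 0 z, exp (-(x ^ 2 / 2)) := by
  have hhalf : ∫ x in Ioi 0, exp (-(x ^ 2 / 2)) = √(2 * π) / 2 := by
    convert integral_gaussian_Ioi (1 / 2) using 4 with x
    · ring
    · ring
  have hsplit : ∫ x in Ioi 0, exp (-(x ^ 2 / 2)) =
      (∫ x in Ioo 0 z, exp (-(x ^ 2 / 2))) + ∫ x in Ioi z, exp (-(x ^ 2 / 2)) := by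
    rw [← integral_Ioc_eq_integral_Ioo, ← Ioc_union_Ioi_eq_Ioi hz,
      setIntegral_union (Ioc_disjoint_Ioi le_rfl) measurableSet_Ioi
        integrable_exp_neg_sq_div_two.integrableOn integrable_exp_neg_sq_div_two.integrableOn]
  have hsqrt : 0 < √(2 * π) := by positivity
  rw [gaussQ, integral_const_mul, rpow_neg (by positivity), ← sqrt_eq_rpow]
  field_simp
  linarith

theorem gaussQ_nonneg (z : ℝ) : 0 ≤ gaussQ z :=
  setIntegral_nonneg measurableSet_Ioi fun x _ ↦ by positivity

theorem gaussQ_le_half {z : ℝ} (hz : 0 ≤ z) : gaussQ z ≤ 1 / 2 := by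
  rw [gaussQ_eq hz, sub_le_self_iff]
  exact mul_nonneg (by positivity) (setIntegral_nonneg measurableSet_Ioo fun x _ ↦ by positivity)

theorem four_mul_gaussQ_mul_one_sub_le {z : ℝ} (hz : 0 ≤ z) :
    4 * gaussQ z * (1 - gaussQ z) ≤ exp (-(z ^ 2 / 2)) := by
  have hdisk := pi_div_two_mul_one_sub_exp_le_sq_integral hz
  rw [gaussQ_eq hz]
  generalize ∫ x in Ioo 0 z, exp (-(x ^ 2 / 2)) = J at hdisk ⊢
  have hsq : √(2 * π) ^ 2 = 2 * π := sq_sqrt (by positivity)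
  calc 4 * (1 / 2 - (√(2 * π))⁻¹ * J) * (1 - (1 / 2 - (√(2 * π))⁻¹ * J))
      = 1 - 4 * ((√(2 * π))⁻¹) ^ 2 * J ^ 2 := by ring
    _ = 1 - 2 / π * J ^ 2 := by
        rw [inv_pow, hsq]
        field_simp
        ring
    _ ≤ 1 - 2 / π * (π / 2 * (1 - exp (-(z ^ 2 / 2)))) := by gcongr
    _ = exp (-(z ^ 2 / 2)) := by
        field_simp
        ring

theorem four_mul_sub_four_mul_sq_le {q E t : ℝ} (hq0 : 0 ≤ q) (hq : q ≤ 1 / 2)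
    (hE : 4 * q * (1 - q) ≤ E) (ht0 : 0 ≤ t) (ht1 : t ≤ 1) :
    4 * (1 - t) * q - 4 * (1 - t) ^ 2 * q ^ 2 ≤ (1 - t ^ 2) * E := by
  have hdiff : (1 - t ^ 2) * E - (4 * (1 - t) * q - 4 * (1 - t) ^ 2 * q ^ 2) =
      (1 - t) * ((1 + t) * (E - 4 * q * (1 - q)) + 4 * t * (q * (1 - 2 * q))) := by ring
  have hnonneg : 0 ≤ (1 - t) * ((1 + t) * (E - 4 * q * (1 - q)) + 4 * t * (q * (1 - 2 * q))) :=
    mul_nonneg (by linarith) <| add_nonneg (mul_nonneg (by linarith) (by linarith))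
      (mul_nonneg (by positivity) (mul_nonneg hq0 (by linarith)))
  linarith

/-- For every `z ≥ 0` and `t ∈ [0,1]`,
`4(1−t) Q(z) − 4(1−t)² Q(z)² ≤ (1−t²) e^{−z²/2}`. -/
theorem stmt14 (z t : ℝ) (hz : 0 ≤ z) (ht0 : 0 ≤ t) (ht1 : t ≤ 1) :
    4 * (1 - t) * gaussQ z - 4 * (1 - t) ^ 2 * (gaussQ z) ^ 2 ≤
      (1 - t ^ 2) * Real.exp (-(z ^ 2 / 2)) :=
  four_mul_sub_four_mul_sq_le (gaussQ_nonneg z) (gaussQ_le_half hz)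
    (four_mul_gaussQ_mul_one_sub_le hz) ht0 ht1
end

section
/- Let K be a positive integer, let λ_1, …, λ_K > 0 and ε > 0 be reals. Define f : ℝ^K → ℝ by f(x) = (1/π)·∫_0^{π/2} ∏_{k=1}^K (1 + ε·λ_k·x_k/sin²θ)^{-1} dθ. Then f is a convex function on the convex set {x ∈ ℝ^K : x_k ≥ 0 for all k}. -/
/-!
For fixed `θ` the integrand is `exp (∑ k, -log (1 + c_k x_k))` with `c_k = ε λ_k / sin² θ ≥ 0`:
each `-log (1 + c_k x_k)` is convex on the orthant, a sum of convex functions is convex, and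
`exp` is convex and increasing, so the integrand is convex in `x`. Integrating in `θ` and
scaling by `1/π` preserves convexity; integrability holds because the integrand takes values
in `[0, 1]`.
-/

open Real MeasureTheory Set

section Convexity

variable {𝕜 E β ι : Type*} [Semiring 𝕜] [PartialOrder 𝕜] [AddCommMonoid E] [SMul 𝕜 E]
  [AddCommMonoid β] [PartialOrder β] [IsOrderedAddMonoid β] [DistribMulAction 𝕜 β]
  {s : Set E}

theorem convexOn_finset_sum (hs : Convex 𝕜 s) (t : Finset ι) {f : ι → E → β}
    (hf : ∀ i ∈ t, ConvexOn 𝕜 s (f i)) : ConvexOn 𝕜 s fun x => ∑ i ∈ t, f i x := by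
  classical
  induction t using Finset.induction_on with
  | empty => exact ⟨hs, fun _ _ _ _ _ _ _ _ _ => by simp⟩
  | insert i t hit ih =>
    simp_rw [Finset.sum_insert hit]
    exact (hf i (t.mem_insert_self i)).add (ih fun j hj => hf j (Finset.mem_insert_of_mem hj))

end Convexity

theorem ConvexOn.exp {E : Type*} [AddCommMonoid E] [SMul ℝ E] {s : Set E} {f : E → ℝ}
    (hf : ConvexOn ℝ s f) : ConvexOn ℝ s fun x => Real.exp (f x) :=
  ⟨hf.1, fun _ hx _ hy _ _ ha hb hab =>
    (exp_le_exp.2 (hf.2 hx hy ha hb hab)).trans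
      (convexOn_exp.2 (mem_univ _) (mem_univ _) ha hb hab)⟩

theorem convexOn_integral {α E : Type*} [MeasurableSpace α] {μ : Measure α} [AddCommMonoid E]
    [SMul ℝ E] {s : Set E} {F : α → E → ℝ} (hs : Convex ℝ s)
    (hF : ∀ᵐ θ ∂μ, ConvexOn ℝ s (F θ)) (hint : ∀ x ∈ s, Integrable (fun θ => F θ x) μ) :
    ConvexOn ℝ s fun x => ∫ θ, F θ x ∂μ := by
  refine ⟨hs, fun x hx y hy a b ha hb hab => ?_⟩
  calc ∫ θ, F θ (a • x + b • y) ∂μ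
      ≤ ∫ θ, a * F θ x + b * F θ y ∂μ :=
        integral_mono_ae (hint _ (hs hx hy ha hb hab))
          (((hint x hx).const_mul a).add ((hint y hy).const_mul b))
          (hF.mono fun θ hθ => hθ.2 hx hy ha hb hab)
    _ = a • ∫ θ, F θ x ∂μ + b • ∫ θ, F θ y ∂μ := by
        rw [integral_add ((hint x hx).const_mul a) ((hint y hy).const_mul b),
          integral_const_mul, integral_const_mul, smul_eq_mul, smul_eq_mul]

section Orthant

variable {ι : Type*}

theorem convexOn_neg_log_one_add_mul_apply {c : ℝ} (hc : 0 ≤ c) (i : ι) :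
    ConvexOn ℝ (Ici 0) fun x : ι → ℝ => -log (1 + c * x i) := by
  let g : (ι → ℝ) →ᵃ[ℝ] ℝ := AffineMap.const ℝ _ 1 + (c • LinearMap.proj i).toAffineMap
  have hg : ∀ x, g x = 1 + c * x i := fun x => by simp [g]
  refine (((strictConcaveOn_log_Ioi.concaveOn.neg).comp_affineMap g).subset ?_
    (convex_Ici 0)).congr fun x _ => by simp [hg]
  intro x hx
  simp only [mem_preimage, hg, mem_Ioi]
  have : 0 ≤ x i := hx i
  positivity

theorem convexOn_prod_inv_one_add_mul [Fintype ι] {c : ι → ℝ} (hc : ∀ i, 0 ≤ c i) :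
    ConvexOn ℝ (Ici 0) fun x : ι → ℝ => ∏ i, (1 + c i * x i)⁻¹ := by
  refine (convexOn_finset_sum (convex_Ici 0) Finset.univ fun i _ =>
    convexOn_neg_log_one_add_mul_apply (hc i) i).exp.congr fun x hx => ?_
  dsimp only
  rw [exp_sum]
  refine Finset.prod_congr rfl fun i _ => ?_
  have := hc i
  have : 0 ≤ x i := hx i
  rw [exp_neg, exp_log (by positivity)]

theorem abs_prod_inv_one_add_le_one (s : Finset ι) {t : ι → ℝ} (ht : ∀ i, 0 ≤ t i) :
    |∏ i ∈ s, (1 + t i)⁻¹| ≤ 1 := by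
  rw [Finset.abs_prod]
  refine Finset.prod_le_one (fun _ _ => abs_nonneg _) fun i _ => ?_
  rw [abs_inv, abs_of_pos (by linarith [ht i])]
  exact inv_le_one_of_one_le₀ (by linarith [ht i])

end Orthant

theorem stmt17_general (K : ℕ) (lam : Fin K → ℝ) (hlam : ∀ k, 0 < lam k)
    (ε : ℝ) (hε : 0 < ε) :
    ConvexOn ℝ {x : Fin K → ℝ | ∀ k, 0 ≤ x k}
      (fun x : Fin K → ℝ =>
        (1 / Real.pi) * ∫ θ in (0 : ℝ)..(Real.pi / 2),
          ∏ k : Fin K, (1 + ε * lam k * x k / Real.sin θ ^ 2)⁻¹) := by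
  have hc : ∀ θ k, 0 ≤ ε * lam k / sin θ ^ 2 := fun θ k => by have := hlam k; positivity
  have hconv : ∀ θ, ConvexOn ℝ (Ici 0) fun x : Fin K → ℝ =>
      ∏ k, (1 + ε * lam k * x k / sin θ ^ 2)⁻¹ := fun θ =>
    (convexOn_prod_inv_one_add_mul (hc θ)).congr fun x _ =>
      Finset.prod_congr rfl fun k _ => by rw [div_mul_eq_mul_div]
  have hint : ∀ x ∈ Ici (0 : Fin K → ℝ), Integrable
      (fun θ => ∏ k, (1 + ε * lam k * x k / sin θ ^ 2)⁻¹) (volume.restrict (Ioc 0 (π / 2))) :=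
    fun x hx =>
      Integrable.of_bound (Finset.measurable_prod _ fun k _ => by fun_prop).aestronglyMeasurable 1 <|
        .of_forall fun θ => abs_prod_inv_one_add_le_one _ fun k => by
          have := hlam k; have : 0 ≤ x k := hx k; positivity
  simp only [intervalIntegral.integral_of_le (by positivity : (0 : ℝ) ≤ π / 2)]
  -- the orthant `{x | ∀ k, 0 ≤ x k}` is `Ici 0` for the pointwise order, definitionally
  exact (convexOn_integral (convex_Ici 0) (.of_forall hconv) hint).smul (by positivity)

/-- For `λ_k > 0` and `ε > 0`, the function
`f(x) = (1/π) ∫₀^{π/2} ∏_k (1 + ε λ_k x_k / sin²θ)⁻¹ dθ`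
is convex on the nonnegative orthant of `ℝ^K`. -/
theorem stmt17 (K : ℕ) (hK : 0 < K) (lam : Fin K → ℝ) (hlam : ∀ k, 0 < lam k)
    (ε : ℝ) (hε : 0 < ε) :
    ConvexOn ℝ {x : Fin K → ℝ | ∀ k, 0 ≤ x k}
      (fun x : Fin K → ℝ =>
        (1 / Real.pi) * ∫ θ in (0 : ℝ)..(Real.pi / 2),
          ∏ k : Fin K, (1 + ε * lam k * x k / Real.sin θ ^ 2)⁻¹) :=
  stmt17_general K lam hlam ε hε
end

section
/- Let M be a positive integer, let λ_1 ≥ λ_2 ≥ … ≥ λ_M > 0 and c > 0 be reals. Suppose M_0 ∈ {1, …, M} and set ν = (1/M_0)·(1 + (1/c)·Σ_{ℓ=1}^{M_0} 1/λ_ℓ). Assume ν − 1/(c·λ_{M_0}) > 0, and if M_0 < M assume ν − 1/(c·λ_{M_0+1}) ≤ 0. Define x* ∈ ℝ^M by x*_k = ν − 1/(c·λ_k) for k ≤ M_0 and x*_k = 0 for k > M_0. Then x* is feasible (x*_k ≥ 0 for all k and Σ_{k=1}^M x*_k = 1), and for every x ∈ ℝ^M with x_k ≥ 0 for all k and Σ_{k=1}^M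 x_k ≤ 1, one has ∏_{k=1}^M (1 + c·λ_k·x_k) ≤ ∏_{k=1}^M (1 + c·λ_k·x*_k). -/
/-! The objective is a sum of concave functions `log (1 + a_k x_k)`, so it suffices to check the
KKT conditions at `x*` with multiplier `1/ν`: on the active indices `1 + a_k x*_k = a_k ν`, and on
the inactive ones `a_k ν ≤ 1`, which is where the ordering of the `λ_k` and the choice of `M₀`
enter. Summing the tangent-line bounds `log (1 + a_k x_k) ≤ log (1 + a_k x*_k) + (x_k - x*_k)/ν`
and using `∑ x_k ≤ 1 = ∑ x*_k` gives the claim. -/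

open Finset Real

lemma Real.log_le_log_add_sub_div {u v : ℝ} (hu : 0 < u) (hv : 0 < v) :
    log u ≤ log v + (u - v) / v := by
  have h := log_le_sub_one_of_pos (div_pos hu hv)
  rw [log_div hu.ne' hv.ne', div_sub_one hv.ne'] at h
  linarith

lemma log_one_add_mul_le_of_waterLevel {a x y ν : ℝ} (ha : 0 ≤ a) (hx : 0 ≤ x) (hy : 0 ≤ y)
    (hν : 0 < ν) (hle : a * ν ≤ 1 + a * y) (hactive : 0 < y → a * ν = 1 + a * y) :
    log (1 + a * x) ≤ log (1 + a * y) + (x - y) / ν := by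
  have hw : 0 < 1 + a * y := by positivity
  have hslope : a * (x - y) / (1 + a * y) ≤ (x - y) / ν := by
    have hxle : a * ν * x ≤ (1 + a * y) * x := mul_le_mul_of_nonneg_right hle hx
    have hyeq : a * ν * y = (1 + a * y) * y := by
      rcases hy.eq_or_lt with rfl | hy
      · simp
      · rw [hactive hy]
    rw [div_le_div_iff₀ hw hν]
    linarith
  calc log (1 + a * x) ≤ log (1 + a * y) + (1 + a * x - (1 + a * y)) / (1 + a * y) :=
        log_le_log_add_sub_div (by positivity) hw
    _ = log (1 + a * y) + a * (x - y) / (1 + a * y) := by ring_nf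
    _ ≤ log (1 + a * y) + (x - y) / ν := by gcongr

theorem prod_one_add_mul_le_of_waterLevel {ι : Type*} [Fintype ι] {a x y : ι → ℝ} {ν : ℝ}
    (ha : ∀ k, 0 ≤ a k) (hx : ∀ k, 0 ≤ x k) (hy : ∀ k, 0 ≤ y k) (hν : 0 < ν)
    (hle : ∀ k, a k * ν ≤ 1 + a k * y k)
    (hactive : ∀ k, 0 < y k → a k * ν = 1 + a k * y k) (hsum : ∑ k, x k ≤ ∑ k, y k) :
    ∏ k, (1 + a k * x k) ≤ ∏ k, (1 + a k * y k) := by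
  have hpos : ∀ z : ι → ℝ, (∀ k, 0 ≤ z k) → ∀ k, 0 < 1 + a k * z k :=
    fun z hz k => by have := ha k; have := hz k; positivity
  rw [← log_le_log_iff (prod_pos fun k _ => hpos x hx k) (prod_pos fun k _ => hpos y hy k),
    log_prod fun k _ => (hpos x hx k).ne', log_prod fun k _ => (hpos y hy k).ne']
  calc ∑ k, log (1 + a k * x k) ≤ ∑ k, (log (1 + a k * y k) + (x k - y k) / ν) :=
        sum_le_sum fun k _ =>
          log_one_add_mul_le_of_waterLevel (ha k) (hx k) (hy k) hν (hle k) (hactive k)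
    _ = ∑ k, log (1 + a k * y k) + (∑ k, x k - ∑ k, y k) / ν := by
        rw [sum_add_distrib, ← sum_div, sum_sub_distrib]
    _ ≤ ∑ k, log (1 + a k * y k) := by
        have : (∑ k, x k - ∑ k, y k) / ν ≤ 0 := div_nonpos_of_nonpos_of_nonneg (by linarith) hν.le
        linarith

lemma sum_sub_inv_mul_eq_one {ι : Type*} {s : Finset ι} {lam : ι → ℝ} {c ν : ℝ}
    (hs : s.Nonempty) (hc : c ≠ 0)
    (hν : ν = (1 / (#s : ℝ)) * (1 + (1 / c) * ∑ ℓ ∈ s, (lam ℓ)⁻¹)) :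
    ∑ ℓ ∈ s, (ν - (c * lam ℓ)⁻¹) = 1 := by
  have hcard : (#s : ℝ) ≠ 0 := by exact_mod_cast hs.card_pos.ne'
  simp_rw [sum_sub_distrib, sum_const, nsmul_eq_mul, mul_inv, ← mul_sum, hν]
  field_simp
  ring

section WaterLevel

variable {ι : Type*} [Preorder ι] {lam : ι → ℝ} {c ν : ℝ}

lemma sub_inv_mul_nonneg_of_le (hlam : Antitone lam) (hc : 0 < c) (hlam0 : ∀ k, 0 < lam k)
    {k j : ι} (hkj : k ≤ j) (hj : 0 < ν - (c * lam j)⁻¹) : 0 ≤ ν - (c * lam k)⁻¹ := by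
  have : (c * lam k)⁻¹ ≤ (c * lam j)⁻¹ := by
    gcongr
    · exact mul_pos hc (hlam0 j)
    · exact hlam hkj
  linarith

lemma mul_mul_le_one_of_le (hlam : Antitone lam) (hc : 0 < c) (hlam0 : ∀ k, 0 < lam k)
    (hν : 0 ≤ ν) {j k : ι} (hjk : j ≤ k) (hj : ν - (c * lam j)⁻¹ ≤ 0) : c * lam k * ν ≤ 1 := by
  have hcj : 0 < c * lam j := mul_pos hc (hlam0 j)
  calc c * lam k * ν ≤ c * lam j * (c * lam j)⁻¹ := by
        gcongr
        · exact hlam hjk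
        · linarith
    _ = 1 := mul_inv_cancel₀ hcj.ne'

end WaterLevel

/-- **water-filling.** Let `λ₁ ≥ … ≥ λ_M > 0`, `c > 0`,
`ν = (1/M₀)(1 + (1/c) Σ_{ℓ=1}^{M₀} 1/λ_ℓ)` with `ν − 1/(cλ_{M₀}) > 0` and (when `M₀ < M`)
`ν − 1/(cλ_{M₀+1}) ≤ 0`. Define `x*_k = ν − 1/(cλ_k)` for `k ≤ M₀` and `x*_k = 0`
otherwise. Then `x*` is feasible (nonnegative, summing to `1`) and maximizes
`∏_k (1 + cλ_k x_k)` over all nonnegative `x` with `Σ_k x_k ≤ 1`. -/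
theorem stmt18 (M : ℕ) (lam : Fin M → ℝ)
    (hlam : Antitone lam) (hlam0 : ∀ k, 0 < lam k)
    (c : ℝ) (hc : 0 < c)
    (M₀ : ℕ) (hM₀1 : 1 ≤ M₀) (hM₀M : M₀ ≤ M)
    (ν : ℝ)
    (hν : ν = (1 / (M₀ : ℝ)) *
      (1 + (1 / c) * ∑ ℓ ∈ Finset.univ.filter (fun ℓ : Fin M => (ℓ : ℕ) < M₀),
        (lam ℓ)⁻¹))
    (hlast : 0 < ν - (c * lam ⟨M₀ - 1, by omega⟩)⁻¹)
    (hnext : ∀ hlt : M₀ < M, ν - (c * lam ⟨M₀, hlt⟩)⁻¹ ≤ 0)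
    (xstar : Fin M → ℝ)
    (hx : ∀ k : Fin M, xstar k = if (k : ℕ) < M₀ then ν - (c * lam k)⁻¹ else 0) :
    (∀ k, 0 ≤ xstar k) ∧ (∑ k, xstar k = 1) ∧
      ∀ x : Fin M → ℝ, (∀ k, 0 ≤ x k) → (∑ k, x k) ≤ 1 →
        (∏ k, (1 + c * lam k * x k)) ≤ ∏ k, (1 + c * lam k * xstar k) := by
  have ha : ∀ k, 0 < c * lam k := fun k => mul_pos hc (hlam0 k)
  have hν0 : 0 < ν := (inv_pos.2 (ha _)).trans (sub_pos.1 hlast)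
  have hnonneg : ∀ k, 0 ≤ xstar k := fun k => by
    rw [hx k]
    split_ifs with hk
    · exact sub_inv_mul_nonneg_of_le hlam hc hlam0 (Fin.le_def.2 (show (k : ℕ) ≤ M₀ - 1 by omega))
        hlast
    · exact le_rfl
  have hsum : ∑ k, xstar k = 1 := by
    have hcard : #(univ.filter fun ℓ : Fin M => (ℓ : ℕ) < M₀) = M₀ := by
      rw [Fin.card_filter_val_lt, min_eq_right hM₀M]
    simp_rw [hx, sum_ite, sum_const_zero, add_zero]
    exact sum_sub_inv_mul_eq_one (card_pos.1 (by omega)) hc.ne' (by rw [hcard]; exact hν)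
  have hlevel : ∀ k, c * lam k * ν ≤ 1 + c * lam k * xstar k ∧
      (0 < xstar k → c * lam k * ν = 1 + c * lam k * xstar k) := fun k => by
    rw [hx k]
    split_ifs with hk
    · have : 1 + c * lam k * (ν - (c * lam k)⁻¹) = c * lam k * ν := by
        rw [mul_sub, mul_inv_cancel₀ (ha k).ne']
        ring
      exact ⟨this.ge, fun _ => this.symm⟩
    · have hlt : M₀ < M := by omega
      refine ⟨?_, fun h => absurd h (lt_irrefl 0)⟩
      simpa using mul_mul_le_one_of_le hlam hc hlam0 hν0.le
        (Fin.le_def.2 (show M₀ ≤ (k : ℕ) by omega)) (hnext hlt)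
  exact ⟨hnonneg, hsum, fun x hx0 hx1 => prod_one_add_mul_le_of_waterLevel (fun k => (ha k).le)
    hx0 hnonneg hν0 (fun k => (hlevel k).1) (fun k => (hlevel k).2) (hsum ▸ hx1)⟩
end
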